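/- For all natural numbers N₁, N₂ there exists N₃ ≤ 30N₁ + 2N₂ such that the following holds: for every finite symmetric subset S of SL(2,ℤ) containing the identity and generating a subgroup that is not virtually solvable, if a ∈ S^{N₁} is an element of infinite order that is diagonalizable over ℂ, with nonzero non-colinear real eigenvectors u₁, u₂ ∈ ℝ², and if h ∈ S^{N₂} satisfies that neither h·u₁ nor h·u₂ is colinear to u₁ or u₂ (h is in general position with respect to a), then d([u],[v]) ≥ ‖S‖^{-N₃} for all u, v ∈ {u₁, u₂, h·u₁, h·u₂} with [u] ≠ [v]. -/

import Mathlib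

open scoped Pointwise
/-- `a` and `b` freely generate a free subgroup of rank 2: the homomorphism from the free
group on two generators sending the generators to `a` and `b` is injective. -/
def FreelyGenerate {G : Type*} [Group G] (a b : G) : Prop :=
  Function.Injective (FreeGroup.lift (fun x : Bool => if x then a else b) : FreeGroup Bool →* G)

/-- A group is virtually solvable if it has a solvable subgroup of finite index. -/
def IsVirtuallySolvable (G : Type*) [Group G] : Prop :=
  ∃ H : Subgroup G, H.FiniteIndex ∧ IsSolvable H
noncomputable section

/-- Operator norm of a `2×2` real matrix induced by the Euclidean norm on `ℝ²`. -/
def opNorm (A : Matrix (Fin 2) (Fin 2) ℝ) : ℝ :=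
  ‖LinearMap.toContinuousLinearMap (Matrix.toEuclideanLin A)‖

/-- The norm `‖Q‖ = sup_{g ∈ Q} ‖g‖` of a set of matrices. -/
def setNorm (Q : Set (Matrix (Fin 2) (Fin 2) ℝ)) : ℝ :=
  sSup (opNorm '' Q)

/-- `lam` is a (complex) eigenvalue of the real matrix `A`. -/
def IsEigenvalue (A : Matrix (Fin 2) (Fin 2) ℝ) (lam : ℂ) : Prop :=
  ∃ v : Fin 2 → ℂ, v ≠ 0 ∧ (A.map (Complex.ofReal)).mulVec v = lam • v

/-- `Λ(Q)`: the maximal modulus of an eigenvalue of an element of `Q`. -/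
def matLambda (Q : Set (Matrix (Fin 2) (Fin 2) ℝ)) : ℝ :=
  sSup {x : ℝ | ∃ q ∈ Q, ∃ lam : ℂ, IsEigenvalue q lam ∧ x = ‖lam‖}

/-- `E(Q)`: the minimal norm of `Q` over all conjugations by elements of `GL(2,ℝ)`. -/
def minNorm (Q : Set (Matrix (Fin 2) (Fin 2) ℝ)) : ℝ :=
  ⨅ g : GL (Fin 2) ℝ, setNorm ((fun s => (g : Matrix (Fin 2) (Fin 2) ℝ) * s * ((g⁻¹ : GL (Fin 2) ℝ) : Matrix (Fin 2) (Fin 2) ℝ)) '' Q)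

/-- The canonical embedding of `SL(2,ℤ)` into the `2×2` real matrices. -/
def toReal (g : Matrix.SpecialLinearGroup (Fin 2) ℤ) : Matrix (Fin 2) (Fin 2) ℝ :=
  (g : Matrix (Fin 2) (Fin 2) ℤ).map (Int.cast : ℤ → ℝ)

/-- The cross product (determinant) of two vectors of `ℝ²`. -/
def cross (u v : Fin 2 → ℝ) : ℝ := u 0 * v 1 - u 1 * v 0

/-- The Euclidean norm on `ℝ²`. -/
def enorm2 (u : Fin 2 → ℝ) : ℝ := Real.sqrt (u 0 ^ 2 + u 1 ^ 2)

/-- Fubini–Study distance between the lines spanned by `u` and `v`. -/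
def pdist (u v : Fin 2 → ℝ) : ℝ := |cross u v| / (enorm2 u * enorm2 v)

/-!
The eigenvalues of `a = (p q; r s)` are the roots `c₁, c₂` of `X² - tX + 1`, `t = p + s`. As `a`
has infinite order they are distinct, so `|t| ≥ 3` (whence `‖a‖ ≥ 3/2`) and `q ≠ 0`; hence `uᵢ`
is a multiple of `wᵢ = (q, cᵢ - p)`, a vector over `ℤ[c₁]` whose Galois conjugate (`c₁ ↦ c₂`) is
the other `wⱼ`, and `h wᵢ` is conjugate to `h wⱼ`. For vectors `x, y` over `ℤ[c₁]` with
conjugates `x', y'`, the product `cross x y * cross x' y'` is a norm from `ℤ[c₁]`, hence a nonzero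
integer, so `|cross x y| ≥ 1 / (‖x'‖ ‖y'‖)`. All vectors involved have norm at most `4 ‖a‖ ‖h‖`,
and `h` occurs at most twice among `x, y, x', y'` except for the pair `(h w₁, h w₂)`, where one
uses instead that `h` preserves `cross` and stretches norms by at most `‖h‖`. This gives
`d ≥ (4 ‖a‖)⁻⁴ ‖h‖⁻² ≥ ‖a‖⁻³⁰ ‖h‖⁻²`, and `‖a‖ ≤ ‖S‖ ^ N₁`, `‖h‖ ≤ ‖S‖ ^ N₂`.
-/

open scoped Matrix Matrix.Norms.L2Operator MatrixGroups

lemma enorm2_eq_norm (u : Fin 2 → ℝ) : enorm2 u = ‖WithLp.toLp 2 u‖ := by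
  simp [EuclideanSpace.norm_eq, Fin.sum_univ_two, enorm2]

lemma enorm2_nonneg (u : Fin 2 → ℝ) : 0 ≤ enorm2 u := Real.sqrt_nonneg _

lemma enorm2_pos {u : Fin 2 → ℝ} (hu : u ≠ 0) : 0 < enorm2 u := by
  rw [enorm2_eq_norm, norm_pos_iff]
  exact fun h => hu (congrArg WithLp.ofLp h)

lemma enorm2_single_one (j : Fin 2) : enorm2 (Pi.single j 1) = 1 := by
  fin_cases j <;> simp [enorm2]

lemma enorm2_smul (k : ℝ) (u : Fin 2 → ℝ) : enorm2 (k • u) = |k| * enorm2 u := by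
  rw [enorm2_eq_norm, enorm2_eq_norm, WithLp.toLp_smul, norm_smul, Real.norm_eq_abs]

lemma enorm2_le_abs_add_abs (u : Fin 2 → ℝ) : enorm2 u ≤ |u 0| + |u 1| :=
  Real.sqrt_le_iff.mpr ⟨by positivity,
    by nlinarith [sq_abs (u 0), sq_abs (u 1), abs_nonneg (u 0), abs_nonneg (u 1)]⟩

lemma opNorm_nonneg (A : Matrix (Fin 2) (Fin 2) ℝ) : 0 ≤ opNorm A := norm_nonneg _

lemma enorm2_mulVec_le (A : Matrix (Fin 2) (Fin 2) ℝ) (u : Fin 2 → ℝ) :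
    enorm2 (A *ᵥ u) ≤ opNorm A * enorm2 u := by
  rw [enorm2_eq_norm, enorm2_eq_norm]
  exact A.l2_opNorm_mulVec (WithLp.toLp 2 u)

lemma abs_apply_le_opNorm (A : Matrix (Fin 2) (Fin 2) ℝ) (i j : Fin 2) : |A i j| ≤ opNorm A :=
  calc |A i j| ≤ enorm2 (A *ᵥ Pi.single j 1) := by
        rw [Matrix.mulVec_single_one, enorm2_eq_norm, ← Real.norm_eq_abs]
        exact PiLp.norm_apply_le (WithLp.toLp 2 (A.col j)) i
    _ ≤ opNorm A * enorm2 (Pi.single j 1) := enorm2_mulVec_le A _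
    _ = opNorm A := by rw [enorm2_single_one, mul_one]

lemma abs_trace_le_two_mul_opNorm (A : Matrix (Fin 2) (Fin 2) ℝ) : |A.trace| ≤ 2 * opNorm A := by
  rw [Matrix.trace_fin_two, two_mul]
  exact (abs_add_le _ _).trans (add_le_add (abs_apply_le_opNorm A 0 0) (abs_apply_le_opNorm A 1 1))

lemma cross_smul_left (k : ℝ) (u v : Fin 2 → ℝ) : cross (k • u) v = k * cross u v := by
  simp only [cross, Pi.smul_apply, smul_eq_mul]; ring

lemma cross_smul_right (k : ℝ) (u v : Fin 2 → ℝ) : cross u (k • v) = k * cross u v := by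
  simp only [cross, Pi.smul_apply, smul_eq_mul]; ring

lemma cross_swap (u v : Fin 2 → ℝ) : cross v u = -cross u v := by
  simp only [cross]; ring

lemma cross_mulVec_mulVec (A : Matrix (Fin 2) (Fin 2) ℝ) (u v : Fin 2 → ℝ) :
    cross (A *ᵥ u) (A *ᵥ v) = A.det * cross u v := by
  simp only [cross, Matrix.det_fin_two, Matrix.mulVec, dotProduct, Fin.sum_univ_two]; ring

lemma cross_mulVec_add_cross_mulVec (A : Matrix (Fin 2) (Fin 2) ℝ) (u v : Fin 2 → ℝ) :
    cross (A *ᵥ u) v + cross u (A *ᵥ v) = A.trace * cross u v := by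
  simp only [cross, Matrix.trace_fin_two, Matrix.mulVec, dotProduct, Fin.sum_univ_two]; ring

lemma abs_cross_le (u v : Fin 2 → ℝ) : |cross u v| ≤ enorm2 u * enorm2 v := by
  rw [← Real.sqrt_sq_eq_abs, enorm2, enorm2, ← Real.sqrt_mul (by positivity)]
  apply Real.sqrt_le_sqrt
  unfold cross
  nlinarith [sq_nonneg (u 0 * v 0 + u 1 * v 1)]

lemma one_le_opNorm_of_det_eq_one {A : Matrix (Fin 2) (Fin 2) ℝ} (hA : A.det = 1) :
    1 ≤ opNorm A := by
  have key : 1 ≤ opNorm A ^ 2 := calc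
    1 = |cross (A *ᵥ Pi.single 0 1) (A *ᵥ Pi.single 1 1)| := by
      rw [cross_mulVec_mulVec, hA]; simp [cross]
    _ ≤ opNorm A * enorm2 (Pi.single 0 1) * (opNorm A * enorm2 (Pi.single 1 1)) :=
      (abs_cross_le _ _).trans (mul_le_mul (enorm2_mulVec_le _ _) (enorm2_mulVec_le _ _)
        (enorm2_nonneg _) (mul_nonneg (opNorm_nonneg A) (enorm2_nonneg _)))
    _ = opNorm A ^ 2 := by rw [enorm2_single_one, enorm2_single_one]; ring
  nlinarith [opNorm_nonneg A]

lemma pdist_nonneg (u v : Fin 2 → ℝ) : 0 ≤ pdist u v :=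
  div_nonneg (abs_nonneg _) (mul_nonneg (enorm2_nonneg u) (enorm2_nonneg v))

lemma pdist_smul_smul {k l : ℝ} (hk : k ≠ 0) (hl : l ≠ 0) (u v : Fin 2 → ℝ) :
    pdist (k • u) (l • v) = pdist u v := by
  rw [pdist, pdist, cross_smul_left, cross_smul_right, enorm2_smul, enorm2_smul, abs_mul, abs_mul,
    show |k| * (|l| * |cross u v|) = |k| * |l| * |cross u v| by ring,
    show |k| * enorm2 u * (|l| * enorm2 v) = |k| * |l| * (enorm2 u * enorm2 v) by ring,
    mul_div_mul_left _ _ (by positivity)]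

lemma pdist_le_sq_opNorm_mul_pdist_mulVec {A : Matrix (Fin 2) (Fin 2) ℝ} (hA : A.det = 1)
    (u v : Fin 2 → ℝ) : pdist u v ≤ opNorm A ^ 2 * pdist (A *ᵥ u) (A *ᵥ v) := by
  by_cases huv : cross u v = 0
  · rw [pdist, huv, abs_zero, zero_div]
    exact mul_nonneg (sq_nonneg _) (pdist_nonneg _ _)
  have hAuv : cross (A *ᵥ u) (A *ᵥ v) = cross u v := by rw [cross_mulVec_mulVec, hA, one_mul]
  have hu : 0 < enorm2 u := enorm2_pos fun h => huv (by simp [h, cross])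
  have hv : 0 < enorm2 v := enorm2_pos fun h => huv (by simp [h, cross])
  have hAu : 0 < enorm2 (A *ᵥ u) := enorm2_pos fun h => huv (by rw [← hAuv, h]; simp [cross])
  have hAv : 0 < enorm2 (A *ᵥ v) := enorm2_pos fun h => huv (by rw [← hAuv, h]; simp [cross])
  rw [pdist, pdist, hAuv, mul_div_assoc', div_le_div_iff₀ (mul_pos hu hv) (mul_pos hAu hAv)]
  calc |cross u v| * (enorm2 (A *ᵥ u) * enorm2 (A *ᵥ v))
      ≤ |cross u v| * (opNorm A * enorm2 u * (opNorm A * enorm2 v)) := by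
        gcongr |cross u v| * ?_
        exact mul_le_mul (enorm2_mulVec_le A u) (enorm2_mulVec_le A v) hAv.le
          (mul_nonneg (opNorm_nonneg A) hu.le)
    _ = opNorm A ^ 2 * |cross u v| * (enorm2 u * enorm2 v) := by ring

section Eigenvectors

variable {A : Matrix (Fin 2) (Fin 2) ℝ} {u₁ u₂ : Fin 2 → ℝ} {c₁ c₂ : ℝ}

lemma mul_eq_det_of_cross_ne_zero (h₁ : A *ᵥ u₁ = c₁ • u₁) (h₂ : A *ᵥ u₂ = c₂ • u₂)
    (h : cross u₁ u₂ ≠ 0) : c₁ * c₂ = A.det := by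
  have := cross_mulVec_mulVec A u₁ u₂
  rw [h₁, h₂, cross_smul_left, cross_smul_right, ← mul_assoc] at this
  exact mul_right_cancel₀ h this

lemma add_eq_trace_of_cross_ne_zero (h₁ : A *ᵥ u₁ = c₁ • u₁) (h₂ : A *ᵥ u₂ = c₂ • u₂)
    (h : cross u₁ u₂ ≠ 0) : c₁ + c₂ = A.trace := by
  have := cross_mulVec_add_cross_mulVec A u₁ u₂
  rw [h₁, h₂, cross_smul_left, cross_smul_right, ← add_mul] at this
  exact mul_right_cancel₀ h this

lemma eq_smul_one_of_cross_ne_zero (h₁ : A *ᵥ u₁ = c₁ • u₁) (h₂ : A *ᵥ u₂ = c₁ • u₂)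
    (h : cross u₁ u₂ ≠ 0) : A = c₁ • 1 := by
  refine Matrix.ext fun i j => mul_right_cancel₀ h ?_
  have e₁ := congrFun h₁ i
  have e₂ := congrFun h₂ i
  simp only [Matrix.mulVec, dotProduct, Fin.sum_univ_two, Pi.smul_apply, smul_eq_mul] at e₁ e₂
  simp only [cross, Matrix.smul_apply, Matrix.one_apply, smul_eq_mul]
  fin_cases i <;> fin_cases j <;>
    simp only [Fin.zero_eta, Fin.mk_one, if_true, if_false, Fin.zero_ne_one, one_ne_zero, mul_one,
      mul_zero] at e₁ e₂ ⊢ <;>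
    first
    | linear_combination u₂ 1 * e₁ - u₁ 1 * e₂
    | linear_combination u₁ 0 * e₂ - u₂ 0 * e₁

lemma eq_smul_of_mulVec_eq_smul (hq : A 0 1 ≠ 0) (h : A *ᵥ u₁ = c₁ • u₁) :
    u₁ = (u₁ 0 / A 0 1) • ![A 0 1, c₁ - A 0 0] := by
  have e := congrFun h 0
  simp only [Matrix.mulVec, dotProduct, Fin.sum_univ_two, Pi.smul_apply, smul_eq_mul] at e
  ext i
  fin_cases i
  · simp [hq]
  · simp only [Fin.mk_one, Pi.smul_apply, Matrix.cons_val_one, Matrix.cons_val_fin_one,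
      smul_eq_mul]
    field_simp
    linear_combination e

end Eigenvectors

def toRealHom : SL(2, ℤ) →* Matrix (Fin 2) (Fin 2) ℝ :=
  Matrix.SpecialLinearGroup.coeMonoidHom.comp (Matrix.SpecialLinearGroup.map (Int.castRingHom ℝ))

lemma toRealHom_apply (g : SL(2, ℤ)) : toRealHom g = toReal g := rfl

lemma toReal_apply (g : SL(2, ℤ)) (i j : Fin 2) : toReal g i j = g i j := rfl

lemma det_toReal (g : SL(2, ℤ)) : (toReal g).det = 1 :=
  (Matrix.SpecialLinearGroup.map (Int.castRingHom ℝ) g).2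

lemma toReal_injective : Function.Injective toReal := fun _ _ h =>
  Subtype.ext (Matrix.map_injective Int.cast_injective h)

lemma norm_map_le_pow_of_mem_pow {M R : Type*} [Monoid M] [SeminormedRing R] [NormOneClass R]
    (f : M →* R) {S : Set M} {C : ℝ} (hS : ∀ s ∈ S, ‖f s‖ ≤ C) :
    ∀ {n : ℕ} {a : M}, a ∈ S ^ n → ‖f a‖ ≤ C ^ n
  | 0, a, ha => by rw [pow_zero, Set.mem_one] at ha; simp [ha]
  | n + 1, a, ha => by
    rw [pow_succ] at ha
    obtain ⟨b, hb, c, hc, rfl⟩ := ha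
    rw [map_mul, pow_succ]
    exact (norm_mul_le _ _).trans (mul_le_mul (norm_map_le_pow_of_mem_pow f hS hb) (hS c hc)
      (norm_nonneg _) ((norm_nonneg _).trans (norm_map_le_pow_of_mem_pow f hS hb)))

lemma opNorm_toReal_le_pow_of_mem_pow {S : Set SL(2, ℤ)} (hS : S.Finite) {n : ℕ} {a : SL(2, ℤ)}
    (ha : a ∈ S ^ n) : opNorm (toReal a) ≤ setNorm (toReal '' S) ^ n :=
  norm_map_le_pow_of_mem_pow toRealHom
    (fun s hs => le_csSup ((hS.image _).image _).bddAbove ⟨toReal s, ⟨s, hs, rfl⟩, rfl⟩) ha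

section Hyperbolic

variable {a : SL(2, ℤ)} {u₁ u₂ : Fin 2 → ℝ} {c₁ c₂ : ℝ}

lemma isOfFinOrder_of_toReal_eq_smul_one {c : ℝ} (h : toReal a = c • 1) : IsOfFinOrder a := by
  have hc : c ^ 2 = 1 := by simpa [h, Matrix.det_smul, sq] using det_toReal a
  refine isOfFinOrder_iff_pow_eq_one.mpr ⟨2, two_pos, toReal_injective ?_⟩
  rw [← toRealHom_apply, map_pow, toRealHom_apply, h, smul_pow, hc, one_pow, one_smul,
    ← toRealHom_apply, map_one]

lemma add_eq_trace_of_mulVec_eq_smul (h₁ : toReal a *ᵥ u₁ = c₁ • u₁)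
    (h₂ : toReal a *ᵥ u₂ = c₂ • u₂) (h : cross u₁ u₂ ≠ 0) :
    c₁ + c₂ = ((a 0 0 + a 1 1 : ℤ) : ℝ) := by
  rw [add_eq_trace_of_cross_ne_zero h₁ h₂ h, Matrix.trace_fin_two, toReal_apply, toReal_apply,
    Int.cast_add]

lemma mul_eq_one_of_mulVec_eq_smul (h₁ : toReal a *ᵥ u₁ = c₁ • u₁)
    (h₂ : toReal a *ᵥ u₂ = c₂ • u₂) (h : cross u₁ u₂ ≠ 0) : c₁ * c₂ = 1 := by
  rw [mul_eq_det_of_cross_ne_zero h₁ h₂ h, det_toReal]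

lemma three_le_abs_trace (ha : ¬IsOfFinOrder a) (h₁ : toReal a *ᵥ u₁ = c₁ • u₁)
    (h₂ : toReal a *ᵥ u₂ = c₂ • u₂) (h : cross u₁ u₂ ≠ 0) : 3 ≤ |a 0 0 + a 1 1| := by
  have hne : c₁ ≠ c₂ := by
    rintro rfl
    exact ha (isOfFinOrder_of_toReal_eq_smul_one (eq_smul_one_of_cross_ne_zero h₁ h₂ h))
  have hs := add_eq_trace_of_mulVec_eq_smul h₁ h₂ h
  have hp := mul_eq_one_of_mulVec_eq_smul h₁ h₂ h
  have h4 : 4 < (a 0 0 + a 1 1) ^ 2 := by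
    have : (0 : ℝ) < (c₁ - c₂) ^ 2 := by positivity [sub_ne_zero.mpr hne]
    exact_mod_cast (show (4 : ℝ) < ((a 0 0 + a 1 1 : ℤ) : ℝ) ^ 2 by rw [← hs]; nlinarith)
  by_contra! ht
  nlinarith [sq_abs (a 0 0 + a 1 1), abs_nonneg (a 0 0 + a 1 1)]

lemma abs_le_two_mul_opNorm_of_mulVec_eq_smul (h₁ : toReal a *ᵥ u₁ = c₁ • u₁)
    (h₂ : toReal a *ᵥ u₂ = c₂ • u₂) (h : cross u₁ u₂ ≠ 0) : |c₁| ≤ 2 * opNorm (toReal a) := by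
  have hp : c₁ * c₂ = 1 := mul_eq_one_of_mulVec_eq_smul h₁ h₂ h
  calc |c₁| ≤ |c₁ + c₂| := sq_le_sq.mp (by nlinarith [sq_nonneg c₂])
    _ ≤ 2 * opNorm (toReal a) := by
      rw [add_eq_trace_of_cross_ne_zero h₁ h₂ h]; exact abs_trace_le_two_mul_opNorm _

lemma three_le_two_mul_opNorm (ha : ¬IsOfFinOrder a) (h₁ : toReal a *ᵥ u₁ = c₁ • u₁)
    (h₂ : toReal a *ᵥ u₂ = c₂ • u₂) (h : cross u₁ u₂ ≠ 0) : 3 ≤ 2 * opNorm (toReal a) :=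
  calc (3 : ℝ) ≤ |((a 0 0 + a 1 1 : ℤ) : ℝ)| := by exact_mod_cast three_le_abs_trace ha h₁ h₂ h
    _ = |(toReal a).trace| := by rw [Matrix.trace_fin_two, toReal_apply, toReal_apply, Int.cast_add]
    _ ≤ 2 * opNorm (toReal a) := abs_trace_le_two_mul_opNorm _

lemma apply_zero_one_ne_zero_of_three_le_abs_trace (ht : 3 ≤ |a 0 0 + a 1 1|) : a 0 1 ≠ 0 := by
  intro hq
  have hdet : a 0 0 * a 1 1 = 1 := by
    have := a.det_coe
    rwa [Matrix.det_fin_two, hq, zero_mul, sub_zero] at this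
  rcases Int.eq_one_or_neg_one_of_mul_eq_one' hdet with ⟨h₀, h₁⟩ | ⟨h₀, h₁⟩ <;>
    simp [h₀, h₁] at ht

end Hyperbolic

lemma Int.eq_zero_of_sq_eq_sq_sub_four {k t : ℤ} (h : k ^ 2 = t ^ 2 - 4) : k = 0 := by
  rcases le_or_gt |t| 2 with ht | ht
  · nlinarith [sq_abs t, abs_nonneg t, sq_nonneg k]
  · have hk : |k| < |t| := sq_lt_sq.mp (by linarith)
    nlinarith [sq_abs t, sq_abs k, abs_nonneg k]

section Conjugation

variable {t : ℤ} {c₁ c₂ : ℝ}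

lemma exists_int_of_mem_closure (hs : c₁ + c₂ = t) (hp : c₁ * c₂ = 1)
    {x : ℝ × ℝ} (hx : x ∈ Subring.closure {(c₁, c₂)}) :
    ∃ m n : ℤ, x = (m + n * c₁, m + n * c₂) := by
  induction hx using Subring.closure_induction with
  | mem x hx => exact ⟨0, 1, by simpa using hx⟩
  | zero => exact ⟨0, 0, by simp [Prod.zero_eq_mk]⟩
  | one => exact ⟨1, 0, by simp [Prod.one_eq_mk]⟩
  | add x y _ _ hx hy =>
    obtain ⟨m, n, rfl⟩ := hx
    obtain ⟨m', n', rfl⟩ := hy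
    exact ⟨m + m', n + n', by
      simp only [Prod.mk_add_mk, Prod.mk.injEq]; push_cast; constructor <;> ring⟩
  | neg x _ hx =>
    obtain ⟨m, n, rfl⟩ := hx
    exact ⟨-m, -n, by simp only [Prod.neg_mk, Prod.mk.injEq]; push_cast; constructor <;> ring⟩
  | mul x y _ _ hx hy =>
    obtain ⟨m, n, rfl⟩ := hx
    obtain ⟨m', n', rfl⟩ := hy
    refine ⟨m * m' - n * n', m * n' + m' * n + n * n' * t, ?_⟩
    simp only [Prod.mk_mul_mk, Prod.mk.injEq]
    push_cast
    constructor
    · linear_combination (n * n' : ℝ) * (c₁ * hs - hp)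
    · linear_combination (n * n' : ℝ) * (c₂ * hs - hp)

lemma one_le_abs_mul_of_mem_closure (hs : c₁ + c₂ = t) (hp : c₁ * c₂ = 1)
    {x : ℝ × ℝ} (hx : x ∈ Subring.closure {(c₁, c₂)}) (hx₁ : x.1 ≠ 0) : 1 ≤ |x.1 * x.2| := by
  obtain ⟨m, n, rfl⟩ := exists_int_of_mem_closure hs hp hx
  have hN : (m + n * c₁) * (m + n * c₂) = ((m ^ 2 + m * n * t + n ^ 2 : ℤ) : ℝ) := by
    push_cast; linear_combination (m * n : ℝ) * hs + (n : ℝ) ^ 2 * hp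
  rw [hN, ← Int.cast_abs, ← Int.cast_one, Int.cast_le]
  refine Int.one_le_abs fun h0 => hx₁ ?_
  -- a vanishing norm makes the discriminant `t² - 4` a square, forcing `t = ±2`, `c₁ = c₂ = t / 2`
  have hdisc : (2 * m + n * t) ^ 2 = n ^ 2 * (t ^ 2 - 4) := by linear_combination 4 * h0
  obtain ⟨k, hk⟩ : n ∣ 2 * m + n * t := (Int.pow_dvd_pow_iff two_ne_zero).mp ⟨_, hdisc⟩
  rcases eq_or_ne n 0 with rfl | hn
  · obtain rfl : m = 0 := by simpa using hk
    simp
  have hk0 : k = 0 := Int.eq_zero_of_sq_eq_sq_sub_four <| mul_left_cancel₀ (pow_ne_zero 2 hn)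
    (show n ^ 2 * k ^ 2 = n ^ 2 * (t ^ 2 - 4) by
      linear_combination hdisc - (2 * m + n * t + n * k) * hk)
  have ht : (t : ℝ) ^ 2 = 4 := by
    have : n ^ 2 * (t ^ 2 - 4) = 0 := by rw [← hdisc, hk, hk0]; ring
    exact_mod_cast (sub_eq_zero.mp ((mul_eq_zero.mp this).resolve_left (pow_ne_zero 2 hn)))
  have hc : c₁ = c₂ := sub_eq_zero.mp <| pow_eq_zero_iff two_ne_zero |>.mp <| by
    linear_combination (c₁ + c₂ + t) * hs - 4 * hp + ht
  have h2m : (2 * m + n * t : ℝ) = 0 := by exact_mod_cast hk.trans (by rw [hk0, mul_zero])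
  show (m + n * c₁ : ℝ) = 0
  linear_combination h2m / 2 + n / 2 * hs + n / 2 * hc

end Conjugation

section ConjugateVectors

variable (R : Subring (ℝ × ℝ))

def IsConjVec (x x' : Fin 2 → ℝ) : Prop := ∀ k, (x k, x' k) ∈ R

def conjBall (μ : ℝ) : Set (Fin 2 → ℝ) :=
  {x | ∃ x', IsConjVec R x x' ∧ enorm2 x ≤ μ ∧ enorm2 x' ≤ μ}

variable {R} {x x' y y' : Fin 2 → ℝ}

lemma IsConjVec.cross_mem (hx : IsConjVec R x x') (hy : IsConjVec R y y') :
    (cross x y, cross x' y') ∈ R :=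
  R.sub_mem (R.mul_mem (hx 0) (hy 1)) (R.mul_mem (hx 1) (hy 0))

lemma IsConjVec.mulVec (g : SL(2, ℤ)) (hx : IsConjVec R x x') :
    IsConjVec R (toReal g *ᵥ x) (toReal g *ᵥ x') := fun k => by
  convert R.add_mem (R.mul_mem (intCast_mem R (g k 0)) (hx 0))
    (R.mul_mem (intCast_mem R (g k 1)) (hx 1)) using 1
  ext <;> simp [Matrix.mulVec, dotProduct, Fin.sum_univ_two, toReal_apply]

lemma conjBall_mono {μ ν : ℝ} (h : μ ≤ ν) : conjBall R μ ⊆ conjBall R ν :=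
  fun _ ⟨x', hx, h₁, h₂⟩ => ⟨x', hx, h₁.trans h, h₂.trans h⟩

lemma mulVec_mem_conjBall (g : SL(2, ℤ)) {μ β : ℝ} (hg : opNorm (toReal g) ≤ β)
    (hx : x ∈ conjBall R μ) : toReal g *ᵥ x ∈ conjBall R (β * μ) := by
  obtain ⟨x', hxx', h₁, h₂⟩ := hx
  have hβ : 0 ≤ β := (opNorm_nonneg _).trans hg
  exact ⟨_, hxx'.mulVec g,
    (enorm2_mulVec_le _ _).trans (mul_le_mul hg h₁ (enorm2_nonneg _) hβ),
    (enorm2_mulVec_le _ _).trans (mul_le_mul hg h₂ (enorm2_nonneg _) hβ)⟩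

end ConjugateVectors

section Separation

variable {t : ℤ} {c₁ c₂ : ℝ}

-- `ℤ[c₁]` together with its conjugation `c₁ ↦ c₂`, as a subring of `ℝ × ℝ`
local notation "ℤ[c]" => Subring.closure {((c₁, c₂) : ℝ × ℝ)}

lemma inv_sq_le_pdist (hs : c₁ + c₂ = t) (hp : c₁ * c₂ = 1) {μ ν : ℝ} {x y : Fin 2 → ℝ}
    (hx : x ∈ conjBall ℤ[c] μ) (hy : y ∈ conjBall ℤ[c] ν) (hxy : cross x y ≠ 0) :
    ((μ * ν) ^ 2)⁻¹ ≤ pdist x y := by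
  obtain ⟨x', hxx', hx, hx'⟩ := hx
  obtain ⟨y', hyy', hy, hy'⟩ := hy
  have h1 : 1 ≤ |cross x y| * (μ * ν) := calc
    1 ≤ |cross x y * cross x' y'| := one_le_abs_mul_of_mem_closure hs hp (hxx'.cross_mem hyy') hxy
    _ ≤ |cross x y| * (μ * ν) := by
      rw [abs_mul]
      exact mul_le_mul_of_nonneg_left ((abs_cross_le x' y').trans
        (mul_le_mul hx' hy' (enorm2_nonneg _) ((enorm2_nonneg _).trans hx))) (abs_nonneg _)
  have hμν : 0 < μ * ν := pos_of_mul_pos_right (one_pos.trans_le h1) (abs_nonneg _)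
  have hxy₀ : 0 < enorm2 x * enorm2 y := mul_pos (enorm2_pos fun h => hxy (by simp [h, cross]))
    (enorm2_pos fun h => hxy (by simp [h, cross]))
  rw [pdist, le_div_iff₀ hxy₀]
  calc ((μ * ν) ^ 2)⁻¹ * (enorm2 x * enorm2 y) ≤ ((μ * ν) ^ 2)⁻¹ * (μ * ν) :=
        mul_le_mul_of_nonneg_left
          (mul_le_mul hx hy (enorm2_nonneg _) ((enorm2_nonneg _).trans hx)) (by positivity)
    _ = (μ * ν)⁻¹ := by field_simp
    _ ≤ |cross x y| := (inv_le_iff_one_le_mul₀ hμν).mpr h1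

lemma inv_le_pdist_of_mem_pair (hs : c₁ + c₂ = t) (hp : c₁ * c₂ = 1) {μ β : ℝ}
    {x y X Y : Fin 2 → ℝ} {g : SL(2, ℤ)} (hx : x ∈ conjBall ℤ[c] μ) (hy : y ∈ conjBall ℤ[c] μ)
    (hg : opNorm (toReal g) ≤ β) (hX : X ∈ ({x, toReal g *ᵥ x} : Set _))
    (hY : Y ∈ ({y, toReal g *ᵥ y} : Set _)) (hXY : cross X Y ≠ 0) :
    (μ ^ 4 * β ^ 2)⁻¹ ≤ pdist X Y := by
  have hβ : 1 ≤ β := (one_le_opNorm_of_det_eq_one (det_toReal g)).trans hg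
  have hμ : 0 ≤ μ := let ⟨_, _, hxμ, _⟩ := hx; (enorm2_nonneg x).trans hxμ
  have hy' : y ∈ conjBall ℤ[c] (β * μ) := conjBall_mono (le_mul_of_one_le_left hμ hβ) hy
  rcases hX with rfl | rfl <;> rcases hY with rfl | rfl
  · convert inv_sq_le_pdist hs hp hx hy' hXY using 2; ring
  · convert inv_sq_le_pdist hs hp hx (mulVec_mem_conjBall g hg hy) hXY using 2; ring
  · convert inv_sq_le_pdist hs hp (mulVec_mem_conjBall g hg hx) hy hXY using 2; ring
  · rw [cross_mulVec_mulVec, det_toReal, one_mul] at hXY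
    calc (μ ^ 4 * β ^ 2)⁻¹ = ((μ * μ) ^ 2)⁻¹ / β ^ 2 := by ring
      _ ≤ pdist x y / β ^ 2 := by gcongr; exact inv_sq_le_pdist hs hp hx hy hXY
      _ ≤ pdist (toReal g *ᵥ x) (toReal g *ᵥ y) := by
        rw [div_le_iff₀' (by positivity)]
        exact (pdist_le_sq_opNorm_mul_pdist_mulVec (det_toReal g) x y).trans
          (by gcongr; exacts [pdist_nonneg _ _, opNorm_nonneg _])

lemma inv_le_pdist_of_mem_smul (hs : c₁ + c₂ = t) (hp : c₁ * c₂ = 1) {μ β k₁ k₂ : ℝ}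
    {x₁ x₂ u₁ u₂ u v : Fin 2 → ℝ} {g : SL(2, ℤ)} (hk₁ : k₁ ≠ 0) (hk₂ : k₂ ≠ 0)
    (hx₁ : x₁ ∈ conjBall ℤ[c] μ) (hx₂ : x₂ ∈ conjBall ℤ[c] μ) (h₁ : u₁ = k₁ • x₁)
    (h₂ : u₂ = k₂ • x₂) (hg : opNorm (toReal g) ≤ β)
    (hu : u ∈ ({u₁, u₂, toReal g *ᵥ u₁, toReal g *ᵥ u₂} : Set _))
    (hv : v ∈ ({u₁, u₂, toReal g *ᵥ u₁, toReal g *ᵥ u₂} : Set _)) (huv : cross u v ≠ 0) :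
    (μ ^ 4 * β ^ 2)⁻¹ ≤ pdist u v := by
  have hsmul : ∀ w ∈ ({u₁, u₂, toReal g *ᵥ u₁, toReal g *ᵥ u₂} : Set _), ∃ k : ℝ, k ≠ 0 ∧
      ∃ x ∈ conjBall ℤ[c] μ, ∃ X ∈ ({x, toReal g *ᵥ x} : Set _), w = k • X := by
    rintro w (rfl | rfl | rfl | rfl)
    · exact ⟨k₁, hk₁, x₁, hx₁, x₁, Or.inl rfl, h₁⟩
    · exact ⟨k₂, hk₂, x₂, hx₂, x₂, Or.inl rfl, h₂⟩
    · exact ⟨k₁, hk₁, x₁, hx₁, _, Or.inr rfl, by rw [h₁, Matrix.mulVec_smul]⟩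
    · exact ⟨k₂, hk₂, x₂, hx₂, _, Or.inr rfl, by rw [h₂, Matrix.mulVec_smul]⟩
  obtain ⟨k, hk, x, hx, X, hX, rfl⟩ := hsmul u hu
  obtain ⟨l, hl, y, hy, Y, hY, rfl⟩ := hsmul v hv
  rw [cross_smul_left, cross_smul_right] at huv
  rw [pdist_smul_smul hk hl]
  exact inv_le_pdist_of_mem_pair hs hp hx hy hg hX hY
    (right_ne_zero_of_mul (right_ne_zero_of_mul huv))

end Separation

def eigvec (a : SL(2, ℤ)) (c : ℝ) : Fin 2 → ℝ := ![(a 0 1 : ℝ), c - a 0 0]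

lemma isConjVec_eigvec {R : Subring (ℝ × ℝ)} (a : SL(2, ℤ)) {c c' : ℝ} (h : (c, c') ∈ R) :
    IsConjVec R (eigvec a c) (eigvec a c') := by
  intro k
  fin_cases k
  · convert intCast_mem R (a 0 1) using 1; ext <;> simp [eigvec]
  · convert R.sub_mem h (intCast_mem R (a 0 0)) using 1; ext <;> simp [eigvec]

lemma enorm2_eigvec_le (a : SL(2, ℤ)) {c : ℝ} (hc : |c| ≤ 2 * opNorm (toReal a)) :
    enorm2 (eigvec a c) ≤ 4 * opNorm (toReal a) := by
  have hp := abs_apply_le_opNorm (toReal a) 0 0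
  have hq := abs_apply_le_opNorm (toReal a) 0 1
  rw [toReal_apply] at hp hq
  calc enorm2 (eigvec a c) ≤ |(a 0 1 : ℝ)| + |c - a 0 0| := enorm2_le_abs_add_abs _
    _ ≤ |(a 0 1 : ℝ)| + (|c| + |(a 0 0 : ℝ)|) := by gcongr; exact abs_sub _ _
    _ ≤ 4 * opNorm (toReal a) := by linarith

theorem inv_le_pdist_of_eigenvectors {a h : SL(2, ℤ)} (ha : ¬IsOfFinOrder a) {u₁ u₂ : Fin 2 → ℝ}
    {c₁ c₂ : ℝ} (hu₁ : u₁ ≠ 0) (hu₂ : u₂ ≠ 0) (h₁ : toReal a *ᵥ u₁ = c₁ • u₁)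
    (h₂ : toReal a *ᵥ u₂ = c₂ • u₂) (h₁₂ : cross u₁ u₂ ≠ 0) {u v : Fin 2 → ℝ}
    (hu : u ∈ ({u₁, u₂, toReal h *ᵥ u₁, toReal h *ᵥ u₂} : Set _))
    (hv : v ∈ ({u₁, u₂, toReal h *ᵥ u₁, toReal h *ᵥ u₂} : Set _)) (huv : cross u v ≠ 0) :
    ((4 * opNorm (toReal a)) ^ 4 * opNorm (toReal h) ^ 2)⁻¹ ≤ pdist u v := by
  have hs := add_eq_trace_of_mulVec_eq_smul h₁ h₂ h₁₂
  have hp := mul_eq_one_of_mulVec_eq_smul h₁ h₂ h₁₂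
  have h₂₁ : cross u₂ u₁ ≠ 0 := by rwa [cross_swap, neg_ne_zero]
  have hc₁ := abs_le_two_mul_opNorm_of_mulVec_eq_smul h₁ h₂ h₁₂
  have hc₂ := abs_le_two_mul_opNorm_of_mulVec_eq_smul h₂ h₁ h₂₁
  have hq : (a 0 1 : ℝ) ≠ 0 := Int.cast_ne_zero.mpr
    (apply_zero_one_ne_zero_of_three_le_abs_trace (three_le_abs_trace ha h₁ h₂ h₁₂))
  have hmem₁ : (c₁, c₂) ∈ Subring.closure {((c₁, c₂) : ℝ × ℝ)} := Subring.subset_closure rfl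
  have hmem₂ : (c₂, c₁) ∈ Subring.closure {((c₁, c₂) : ℝ × ℝ)} := by
    convert sub_mem (intCast_mem _ (a 0 0 + a 1 1)) hmem₁ using 1
    ext
    · simp only [Prod.fst_sub, Prod.fst_intCast]; linarith
    · simp only [Prod.snd_sub, Prod.snd_intCast]; linarith
  have hw₁ : eigvec a c₁ ∈ conjBall _ (4 * opNorm (toReal a)) := ⟨eigvec a c₂,
    isConjVec_eigvec a hmem₁, enorm2_eigvec_le a hc₁, enorm2_eigvec_le a hc₂⟩
  have hw₂ : eigvec a c₂ ∈ conjBall _ (4 * opNorm (toReal a)) := ⟨eigvec a c₁,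
    isConjVec_eigvec a hmem₂, enorm2_eigvec_le a hc₂, enorm2_eigvec_le a hc₁⟩
  have hk : ∀ {w x : Fin 2 → ℝ} {k : ℝ}, w ≠ 0 → w = k • x → k ≠ 0 :=
    fun hw hwk hk => hw (by rw [hwk, hk, zero_smul])
  have hu₁' := eq_smul_of_mulVec_eq_smul hq h₁
  have hu₂' := eq_smul_of_mulVec_eq_smul hq h₂
  exact inv_le_pdist_of_mem_smul hs hp (hk hu₁ hu₁') (hk hu₂ hu₂') hw₁ hw₂ hu₁' hu₂' le_rfl
    hu hv huv

lemma four_mul_pow_four_le_pow_thirty {x : ℝ} (hx : 3 ≤ 2 * x) : (4 * x) ^ 4 ≤ x ^ 30 :=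
  calc (4 * x) ^ 4 = 256 * x ^ 4 := by ring
    _ ≤ (3 / 2) ^ 26 * x ^ 4 := by gcongr; norm_num
    _ ≤ x ^ 26 * x ^ 4 := by gcongr; linarith
    _ = x ^ 30 := by ring

/-- **Arithmetic linear separation.** For all `N₁, N₂` there exists `N₃ ≤ 30N₁ + 2N₂` such
that for every finite symmetric `S ⊂ SL(2,ℤ)` containing `1` generating a non-virtually
solvable subgroup, every torsion-free semisimple `a ∈ S^{N₁}` with real eigenvectors
`u₁, u₂`, and every `h ∈ S^{N₂}` in general position with respect to `a`, one has
`d([u],[v]) ≥ ‖S‖^{-N₃}` for all `u, v ∈ {u₁, u₂, h u₁, h u₂}` with `[u] ≠ [v]`. -/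
theorem arithmetic_linear_separation (N₁ N₂ : ℕ) :
    ∃ N₃ : ℕ, N₃ ≤ 30 * N₁ + 2 * N₂ ∧
      ∀ S : Set (Matrix.SpecialLinearGroup (Fin 2) ℤ), S.Finite → S⁻¹ = S →
        (1 : Matrix.SpecialLinearGroup (Fin 2) ℤ) ∈ S →
        ¬ IsVirtuallySolvable (Subgroup.closure S) →
        ∀ a ∈ S ^ N₁, ¬ IsOfFinOrder a →
        ∀ u₁ u₂ : Fin 2 → ℝ, u₁ ≠ 0 → u₂ ≠ 0 →
          (∃ c : ℝ, (toReal a).mulVec u₁ = c • u₁) →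
          (∃ c : ℝ, (toReal a).mulVec u₂ = c • u₂) →
          cross u₁ u₂ ≠ 0 →
        ∀ h ∈ S ^ N₂,
          cross ((toReal h).mulVec u₁) u₁ ≠ 0 →
          cross ((toReal h).mulVec u₁) u₂ ≠ 0 →
          cross ((toReal h).mulVec u₂) u₁ ≠ 0 →
          cross ((toReal h).mulVec u₂) u₂ ≠ 0 →
          ∀ u ∈ ({u₁, u₂, (toReal h).mulVec u₁, (toReal h).mulVec u₂} : Set (Fin 2 → ℝ)),
            ∀ v ∈ ({u₁, u₂, (toReal h).mulVec u₁, (toReal h).mulVec u₂} : Set (Fin 2 → ℝ)),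
              cross u v ≠ 0 →
                setNorm (toReal '' S) ^ (-(N₃ : ℤ)) ≤ pdist u v := by
  refine ⟨30 * N₁ + 2 * N₂, le_rfl, ?_⟩
  intro S hS _ _ _ a ha hfin u₁ u₂ hu₁ hu₂ ⟨c₁, h₁⟩ ⟨c₂, h₂⟩ h₁₂ h hh _ _ _ _ u hu v hv huv
  set Λ := setNorm (toReal '' S)
  set α := opNorm (toReal a)
  set β := opNorm (toReal h)
  have hα : α ≤ Λ ^ N₁ := opNorm_toReal_le_pow_of_mem_pow hS ha
  have hβ : β ≤ Λ ^ N₂ := opNorm_toReal_le_pow_of_mem_pow hS hh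
  have hα₃ : 3 ≤ 2 * α := three_le_two_mul_opNorm hfin h₁ h₂ h₁₂
  have hβ₁ : 1 ≤ β := one_le_opNorm_of_det_eq_one (det_toReal h)
  have hα₀ : 0 < α := by linarith
  have hβ₀ : 0 < β := by linarith
  calc Λ ^ (-((30 * N₁ + 2 * N₂ : ℕ) : ℤ)) = ((Λ ^ N₁) ^ 30 * (Λ ^ N₂) ^ 2)⁻¹ := by
        rw [zpow_neg, zpow_natCast, pow_add, ← pow_mul, ← pow_mul, mul_comm N₁, mul_comm N₂]
    _ ≤ (α ^ 30 * β ^ 2)⁻¹ := by gcongr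
    _ ≤ ((4 * α) ^ 4 * β ^ 2)⁻¹ := by gcongr; exact four_mul_pow_four_le_pow_thirty hα₃
    _ ≤ pdist u v := inv_le_pdist_of_eigenvectors hfin hu₁ hu₂ h₁ h₂ h₁₂ hu hv huv
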